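/- Let X and Y be first countable compact Hausdorff spaces, each with at least two points, let Δ : C(X) → C(Y) be a 2-local diameter-preserving map, let φ : X → Y be an injective map, λ ∈ 𝕋 and μ : C(X) → ℂ a functional such that Δ(f)(φ(x)) = λ·f(x) + μ(f) for all f ∈ C(X) and x ∈ X. Then φ is a homeomorphism from X onto its image Y₀ = φ(X) endowed with the subspace topology of Y. -/

import Mathlib

noncomputable section

/-- The diameter seminorm `ρ(f) = sup{|f(x) - f(z)| : x, z ∈ X}` on `C(X, ℂ)`. -/
def cdiam {X : Type*} [TopologicalSpace X] (f : C(X, ℂ)) : ℝ :=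
  ⨆ p : X × X, ‖f p.1 - f p.2‖

/-- A map `Δ : C(X) → C(Y)` is diameter-preserving if `ρ(Δ f - Δ g) = ρ(f - g)` for all `f, g`. -/
def DiamPreserving {X Y : Type*} [TopologicalSpace X] [TopologicalSpace Y]
    (Δ : C(X, ℂ) → C(Y, ℂ)) : Prop :=
  ∀ f g, cdiam (Δ f - Δ g) = cdiam (f - g)

/-- A map `Δ : C(X) → C(Y)` is a 2-local diameter-preserving map if for every `f, g` there is a
diameter-preserving linear bijection agreeing with `Δ` at `f` and `g`. -/
def TwoLocalDiamPreserving {X Y : Type*} [TopologicalSpace X] [TopologicalSpace Y]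
    (Δ : C(X, ℂ) → C(Y, ℂ)) : Prop :=
  ∀ f g : C(X, ℂ), ∃ T : C(X, ℂ) →ₗ[ℂ] C(Y, ℂ),
    Function.Bijective T ∧ DiamPreserving T ∧ T f = Δ f ∧ T g = Δ g

open Filter Topology Set

/-- Complexification of a real-valued continuous map. -/
def cplx {X : Type*} [TopologicalSpace X] (F : C(X, ℝ)) : C(X, ℂ) :=
  ⟨fun x => (F x : ℂ), Complex.continuous_ofReal.comp F.continuous⟩

@[simp] lemma cplx_apply {X : Type*} [TopologicalSpace X] (F : C(X, ℝ)) (x : X) :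
    cplx F x = (F x : ℂ) := rfl

section CdiamLemmas

variable {X : Type*} [TopologicalSpace X] [CompactSpace X]

lemma cdiam_bddAbove (u : C(X, ℂ)) :
    BddAbove (Set.range fun p : X × X => ‖u p.1 - u p.2‖) := by
  refine ⟨‖u‖ + ‖u‖, ?_⟩
  rintro r ⟨q, rfl⟩
  calc ‖u q.1 - u q.2‖ ≤ ‖u q.1‖ + ‖u q.2‖ := norm_sub_le _ _
    _ ≤ ‖u‖ + ‖u‖ :=
      add_le_add (u.norm_coe_le_norm q.1) (u.norm_coe_le_norm q.2)

lemma abs_sub_le_cdiam (u : C(X, ℂ)) (a b : X) :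
    ‖u a - u b‖ ≤ cdiam u :=
  le_ciSup (cdiam_bddAbove u) (a, b)

lemma cdiam_exists [Nonempty X] (u : C(X, ℂ)) :
    ∃ q : X × X, cdiam u = ‖u q.1 - u q.2‖ := by
  have hc : Continuous fun q : X × X => ‖u q.1 - u q.2‖ :=
    continuous_norm.comp
      ((u.continuous.comp continuous_fst).sub (u.continuous.comp continuous_snd))
  obtain ⟨q, -, hq⟩ := isCompact_univ.exists_isMaxOn univ_nonempty hc.continuousOn
  exact ⟨q, le_antisymm (ciSup_le fun p => hq (mem_univ p)) (abs_sub_le_cdiam u q.1 q.2)⟩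

end CdiamLemmas

section Peak

variable {X : Type*} [TopologicalSpace X] [CompactSpace X] [T2Space X] [FirstCountableTopology X]

/-- In a compact Hausdorff first countable space every point is the exact zero set of a
continuous `[0,1]`-valued function. -/
lemma exists_zero_set_point (p : X) :
    ∃ u : C(X, ℝ), (∀ x, u x ∈ Set.Icc (0:ℝ) 1) ∧ (∀ x, u x = 0 ↔ x = p) := by
  obtain ⟨s, hs⟩ := (𝓝 p).exists_antitone_basis
  have hmem : ∀ n, s n ∈ 𝓝 p := fun n => hs.toHasBasis.mem_of_mem trivial
  have hcl : ∀ n, IsClosed (interior (s n))ᶜ := fun _ => isOpen_interior.isClosed_compl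
  have hdisj : ∀ n, Disjoint ({p} : Set X) (interior (s n))ᶜ := by
    intro n
    simp only [Set.disjoint_singleton_left, Set.mem_compl_iff, not_not]
    exact mem_interior_iff_mem_nhds.mpr (hmem n)
  choose g hg0 hg1 hg01 using fun n =>
    exists_continuous_zero_one_of_isClosed isClosed_singleton (hcl n) (hdisj n)
  set c : ℕ → ℝ := fun n => (2:ℝ)⁻¹ ^ (n + 1) with hc
  have hcpos : ∀ n, 0 < c n := fun n => by positivity
  have hgeo : Summable c := by
    simpa [hc, pow_succ] using
      (summable_geometric_of_lt_one (r := (2:ℝ)⁻¹) (by norm_num) (by norm_num)).mul_right (2:ℝ)⁻¹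
  have htot : ∑' n, c n = 1 := by
    have : ∑' n : ℕ, (2:ℝ)⁻¹ ^ n * (2:ℝ)⁻¹ = ((2:ℝ)⁻¹)⁻¹ * (2:ℝ)⁻¹ := by
      rw [tsum_mul_right, tsum_geometric_of_lt_one (by norm_num) (by norm_num)]
      norm_num
    simpa [hc, pow_succ] using this.trans (by norm_num)
  have hb : ∀ (n : ℕ) (x : X), ‖c n * g n x‖ ≤ c n := by
    intro n x
    rw [norm_mul, Real.norm_eq_abs, Real.norm_eq_abs, abs_of_pos (hcpos n),
      abs_of_nonneg (hg01 n x).1]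
    exact mul_le_of_le_one_right (hcpos n).le (hg01 n x).2
  have hsx : ∀ x, Summable fun n => c n * g n x := fun x =>
    Summable.of_norm_bounded hgeo (fun n => hb n x)
  have hUcont : Continuous fun x => ∑' n, c n * g n x :=
    continuous_tsum (fun n => continuous_const.mul (g n).continuous) hgeo (fun n x => hb n x)
  have hterm : ∀ (x : X) (n : ℕ), 0 ≤ c n * g n x := fun x n =>
    mul_nonneg (hcpos n).le (hg01 n x).1
  refine ⟨⟨fun x => ∑' n, c n * g n x, hUcont⟩, ?_, ?_⟩
  · intro x
    constructor
    · exact tsum_nonneg (hterm x)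
    · calc ∑' n, c n * g n x ≤ ∑' n, c n :=
            Summable.tsum_le_tsum (fun n => mul_le_of_le_one_right (hcpos n).le (hg01 n x).2)
              (hsx x) hgeo
        _ = 1 := htot
  · intro x
    simp only [ContinuousMap.coe_mk]
    constructor
    · intro h0
      by_contra hxp
      obtain ⟨n, -, hsub⟩ := hs.toHasBasis.mem_iff.mp
        (compl_singleton_mem_nhds (fun h => hxp h.symm) : ({x}ᶜ : Set X) ∈ 𝓝 p)
      have hxint : x ∈ (interior (s n))ᶜ := by
        intro hx
        exact (hsub (interior_subset hx)) rfl
      have h1 : g n x = 1 := hg1 n hxint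
      have hle : c n * g n x ≤ ∑' m, c m * g m x :=
        Summable.le_tsum (hsx x) n (fun m _ => hterm x m)
      rw [h0, h1, mul_one] at hle
      exact absurd hle (not_le.mpr (hcpos n))
    · intro hxp
      have hz : ∀ n, c n * g n x = 0 := fun n => by
        rw [hxp, hg0 n (Set.mem_singleton p), Pi.zero_apply, mul_zero]
      simp only [hz]
      exact tsum_zero

/-- A continuous `[0,1]`-valued function with value `1` exactly at `p` and `0` exactly at `p'`. -/
lemma exists_peak {p p' : X} (hpp' : p ≠ p') :
    ∃ F : C(X, ℝ), (∀ x, F x ∈ Set.Icc (0:ℝ) 1) ∧ (∀ x, F x = 1 ↔ x = p)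
      ∧ (∀ x, F x = 0 ↔ x = p') := by
  obtain ⟨u, hu01, hu0⟩ := exists_zero_set_point p
  obtain ⟨v, hv01, hv0⟩ := exists_zero_set_point p'
  have hd : ∀ x, 0 < u x + v x := by
    intro x
    rcases lt_or_eq_of_le (hu01 x).1 with h1 | h1
    · linarith [(hv01 x).1]
    · have hx : x = p := (hu0 x).mp h1.symm
      have hvx : v x ≠ 0 := fun h0 => hpp' (hx.symm.trans ((hv0 x).mp h0))
      have := lt_of_le_of_ne (hv01 x).1 (Ne.symm hvx)
      linarith
  have hdne : ∀ x, u x + v x ≠ 0 := fun x => (hd x).ne'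
  refine ⟨⟨fun x => v x / (u x + v x),
    v.continuous.div (u.continuous.add v.continuous) hdne⟩, ?_, ?_, ?_⟩
  · intro x
    simp only [ContinuousMap.coe_mk]
    refine ⟨div_nonneg (hv01 x).1 (hd x).le, ?_⟩
    rw [div_le_one (hd x)]
    linarith [(hu01 x).1]
  · intro x
    simp only [ContinuousMap.coe_mk]
    rw [div_eq_one_iff_eq (hdne x)]
    constructor
    · intro h
      exact (hu0 x).mp (by linarith)
    · intro h
      have : u x = 0 := (hu0 x).mpr h
      linarith
  · intro x
    simp only [ContinuousMap.coe_mk]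
    rw [div_eq_zero_iff]
    constructor
    · rintro (h | h)
      · exact (hv0 x).mp h
      · exact absurd h (hdne x)
    · intro h
      exact Or.inl ((hv0 x).mpr h)

/-- Danskin-type upper estimate: if `F` peaks exactly at `p` (value 1) and is minimal exactly at
`p'` (value 0), then for small `t > 0`,
`cdiam (F + t w) ≤ 1 + t * Re (w p - w p') + ε t`. -/
lemma danskin {p p' : X}
    (F : C(X, ℝ)) (hF01 : ∀ x, F x ∈ Set.Icc (0:ℝ) 1)
    (hF1 : ∀ x, F x = 1 ↔ x = p) (hF0 : ∀ x, F x = 0 ↔ x = p')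
    (w : C(X, ℂ)) {ε : ℝ} (hε : 0 < ε) :
    ∃ η > 0, ∀ t : ℝ, 0 < t → t < η →
      cdiam (cplx F + (t : ℂ) • w) ≤ 1 + t * (w p - w p').re + ε * t := by
  have : Nonempty X := ⟨p⟩
  set δ := (w p - w p').re with hδ
  by_contra hcon
  push_neg at hcon
  have h' : ∀ n : ℕ, ∃ t : ℝ, 0 < t ∧ t < 1 / (n + 1) ∧
      1 + t * δ + ε * t < cdiam (cplx F + (t : ℂ) • w) := by
    intro n
    obtain ⟨t, ht0, htn, hgt⟩ := hcon (1 / (n + 1)) (by positivity)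
    exact ⟨t, ht0, htn, hgt⟩
  choose t ht0 htlt hkey using h'
  have htlim : Tendsto t atTop (𝓝 0) := by
    refine tendsto_of_tendsto_of_tendsto_of_le_of_le tendsto_const_nhds
      tendsto_one_div_add_atTop_nhds_zero_nat (fun n => (ht0 n).le) (fun n => (htlt n).le)
  choose q hq using fun n => cdiam_exists (cplx F + (t n : ℂ) • w)
  obtain ⟨q₀, -, ms, hms, hqlim⟩ :=
    isCompact_univ.tendsto_subseq (x := q) (fun n => Set.mem_univ _)
  have htlim' : Tendsto (fun n => t (ms n)) atTop (𝓝 0) :=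
    htlim.comp hms.tendsto_atTop
  set A : ℕ → ℝ := fun n => F (q n).1 - F (q n).2 with hA
  set B : ℕ → ℂ := fun n => w (q n).1 - w (q n).2 with hB
  have hval : ∀ n, ‖(A n : ℂ) + (t n : ℂ) * B n‖
      = cdiam (cplx F + (t n : ℂ) • w) := by
    intro n
    rw [hq n]
    congr 1
    simp only [hA, hB, ContinuousMap.add_apply, ContinuousMap.smul_apply, cplx_apply,
      smul_eq_mul, Complex.ofReal_sub]
    ring
  -- limits of A, B along the subsequence
  set A₀ : ℝ := F q₀.1 - F q₀.2 with hA₀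
  set B₀ : ℂ := w q₀.1 - w q₀.2 with hB₀
  have hAlim : Tendsto (fun n => A (ms n)) atTop (𝓝 A₀) := by
    have hcont : Continuous fun r : X × X => F r.1 - F r.2 :=
      (F.continuous.comp continuous_fst).sub (F.continuous.comp continuous_snd)
    exact (hcont.tendsto q₀).comp hqlim
  have hBlim : Tendsto (fun n => B (ms n)) atTop (𝓝 B₀) := by
    have hcont : Continuous fun r : X × X => w r.1 - w r.2 :=
      (w.continuous.comp continuous_fst).sub (w.continuous.comp continuous_snd)
    exact (hcont.tendsto q₀).comp hqlim
  -- |A₀| = 1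
  have hA1 : ∀ n, |A n| ≤ 1 := by
    intro n
    rw [abs_le]
    constructor
    · simp only [hA]; linarith [(hF01 (q n).1).1, (hF01 (q n).2).2]
    · simp only [hA]; linarith [(hF01 (q n).1).2, (hF01 (q n).2).1]
  have habslim : Tendsto (fun n => ‖(A (ms n) : ℂ) + (t (ms n) : ℂ) * B (ms n)‖)
      atTop (𝓝 (‖(A₀ : ℂ) + (0 : ℂ) * B₀‖)) := by
    have h1 : Tendsto (fun n => ((A (ms n) : ℝ) : ℂ)) atTop (𝓝 (A₀ : ℂ)) :=
      (Complex.continuous_ofReal.tendsto _).comp hAlim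
    have h2 : Tendsto (fun n => ((t (ms n) : ℝ) : ℂ)) atTop (𝓝 ((0 : ℝ) : ℂ)) :=
      (Complex.continuous_ofReal.tendsto _).comp htlim'
    have h3 : Tendsto (fun n => (A (ms n) : ℂ) + (t (ms n) : ℂ) * B (ms n)) atTop
        (𝓝 ((A₀ : ℂ) + (0 : ℂ) * B₀)) := by
      simpa using h1.add (h2.mul hBlim)
    exact (continuous_norm.tendsto _).comp h3
  have hlower : ∀ n, 1 + t (ms n) * δ + ε * t (ms n)
      ≤ ‖(A (ms n) : ℂ) + (t (ms n) : ℂ) * B (ms n)‖ := by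
    intro n
    rw [hval]
    exact (hkey (ms n)).le
  have hRlim : Tendsto (fun n => 1 + t (ms n) * δ + ε * t (ms n)) atTop (𝓝 1) := by
    have := ((htlim'.mul_const δ).const_add 1).add (htlim'.const_mul ε)
    simpa [mul_comm] using this
  have hA₀abs : |A₀| = 1 := by
    have hge : (1 : ℝ) ≤ ‖(A₀ : ℂ) + (0 : ℂ) * B₀‖ :=
      le_of_tendsto_of_tendsto' hRlim habslim hlower
    have : ‖(A₀ : ℂ) + (0 : ℂ) * B₀‖ = |A₀| := by
      simp [Complex.norm_real]
    rw [this] at hge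
    have hle : |A₀| ≤ 1 := by
      rw [abs_le]
      constructor
      · simp only [hA₀]; linarith [(hF01 q₀.1).1, (hF01 q₀.2).2]
      · simp only [hA₀]; linarith [(hF01 q₀.1).2, (hF01 q₀.2).1]
    linarith
  -- identify the limit pair, in both cases A₀ * B₀.re = δ
  have hprod : A₀ * B₀.re = δ := by
    rcases (abs_eq (by norm_num : (0:ℝ) ≤ 1)).mp hA₀abs with h1 | h1
    · have hq1 : F q₀.1 = 1 := by
        have := (hF01 q₀.1).2
        have := (hF01 q₀.2).1
        simp only [hA₀] at h1
        linarith
      have hq2 : F q₀.2 = 0 := by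
        simp only [hA₀] at h1
        linarith
      have e1 : q₀.1 = p := (hF1 _).mp hq1
      have e2 : q₀.2 = p' := (hF0 _).mp hq2
      rw [h1, hB₀, e1, e2, one_mul, hδ]
    · have hq1 : F q₀.1 = 0 := by
        have := (hF01 q₀.1).1
        have := (hF01 q₀.2).2
        simp only [hA₀] at h1
        linarith
      have hq2 : F q₀.2 = 1 := by
        simp only [hA₀] at h1
        linarith
      have e1 : q₀.1 = p' := (hF0 _).mp hq1
      have e2 : q₀.2 = p := (hF1 _).mp hq2
      rw [h1, hB₀, e1, e2, hδ]
      simp [Complex.sub_re]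
  -- the quantitative inequality, eventually in n
  have hineq : ∀ᶠ n in atTop,
      2 * δ + 2 * ε ≤ 2 * (A (ms n) * (B (ms n)).re)
        + t (ms n) * ((B (ms n)).re ^ 2 + (B (ms n)).im ^ 2) := by
    have hevpos : ∀ᶠ n in atTop, 0 < 1 + t (ms n) * δ + ε * t (ms n) :=
      hRlim.eventually (eventually_gt_nhds (by norm_num : (0:ℝ) < 1))
    filter_upwards [hevpos] with n hpos
    set tn := t (ms n) with htn
    set An := A (ms n) with hAn
    set Bn := B (ms n) with hBn
    have htn0 : 0 < tn := ht0 (ms n)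
    have hM : 1 + tn * δ + ε * tn < ‖(An : ℂ) + (tn : ℂ) * Bn‖ := by
      rw [hval]
      exact hkey (ms n)
    have hsq : (‖(An : ℂ) + (tn : ℂ) * Bn‖) ^ 2
        = An ^ 2 + 2 * tn * (An * Bn.re) + tn ^ 2 * (Bn.re ^ 2 + Bn.im ^ 2) := by
      rw [Complex.sq_norm, Complex.normSq_apply]
      simp only [Complex.add_re, Complex.add_im, Complex.ofReal_re, Complex.ofReal_im,
        Complex.mul_re, Complex.mul_im]
      ring
    have hM2 : (1 + tn * δ + ε * tn) ^ 2
        < An ^ 2 + 2 * tn * (An * Bn.re) + tn ^ 2 * (Bn.re ^ 2 + Bn.im ^ 2) := by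
      rw [← hsq]
      have := mul_self_lt_mul_self hpos.le hM
      nlinarith [this]
    have hAn2 : An ^ 2 ≤ 1 := by
      have := hA1 (ms n)
      nlinarith [abs_nonneg An, this, neg_abs_le An, le_abs_self An]
    nlinarith [hM2, hAn2, htn0, sq_nonneg (δ + ε), sq_nonneg tn,
      mul_pos htn0 htn0]
  have hLlim : Tendsto (fun n => 2 * (A (ms n) * (B (ms n)).re)
      + t (ms n) * ((B (ms n)).re ^ 2 + (B (ms n)).im ^ 2)) atTop (𝓝 (2 * δ)) := by
    have hre : Tendsto (fun n => (B (ms n)).re) atTop (𝓝 B₀.re) :=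
      (Complex.continuous_re.tendsto _).comp hBlim
    have him : Tendsto (fun n => (B (ms n)).im) atTop (𝓝 B₀.im) :=
      (Complex.continuous_im.tendsto _).comp hBlim
    have h1 : Tendsto (fun n => 2 * (A (ms n) * (B (ms n)).re)) atTop
        (𝓝 (2 * (A₀ * B₀.re))) := (hAlim.mul hre).const_mul 2
    have h2 : Tendsto (fun n => t (ms n) * ((B (ms n)).re ^ 2 + (B (ms n)).im ^ 2)) atTop
        (𝓝 (0 * (B₀.re ^ 2 + B₀.im ^ 2))) :=
      htlim'.mul ((hre.pow 2).add (him.pow 2))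
    have := h1.add h2
    rw [hprod] at this
    simpa using this
  have hfin : 2 * δ + 2 * ε ≤ 2 * δ := ge_of_tendsto hLlim hineq
  linarith

end Peak

section Core

variable {X Y : Type*} [TopologicalSpace X] [CompactSpace X] [T2Space X]
  [FirstCountableTopology X] [TopologicalSpace Y] [CompactSpace Y] [T2Space Y]

/-- The key rigidity: if `z n → p` in `X` and `φ (z n) → y` in `Y`, then `y = φ p`. -/
lemma core_limit (h2X : ∃ a b : X, a ≠ b)
    {Δ : C(X, ℂ) → C(Y, ℂ)} (hΔ : TwoLocalDiamPreserving Δ)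
    {φ : X → Y} {lam : ℂ} (hlam : ‖lam‖ = 1) {μ : C(X, ℂ) → ℂ}
    (hrep : ∀ (f : C(X, ℂ)) (x : X), Δ f (φ x) = lam * f x + μ f)
    {z : ℕ → X} {p : X} {y : Y} (hz : Tendsto z atTop (𝓝 p))
    (hy : Tendsto (fun n => φ (z n)) atTop (𝓝 y)) : y = φ p := by
  have hlam0 : lam ≠ 0 := by
    intro h
    rw [h] at hlam
    simp at hlam
  -- Step 1: the value of every Δ g at y
  have hΔy : ∀ g : C(X, ℂ), Δ g y = lam * g p + μ g := by
    intro g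
    have h1 : Tendsto (fun n => Δ g (φ (z n))) atTop (𝓝 (Δ g y)) :=
      ((Δ g).continuous.tendsto y).comp hy
    have h2 : (fun n => Δ g (φ (z n))) = fun n => lam * g (z n) + μ g := by
      funext n
      exact hrep g (z n)
    rw [h2] at h1
    have h3 : Tendsto (fun n => lam * g (z n) + μ g) atTop (𝓝 (lam * g p + μ g)) :=
      (tendsto_const_nhds.mul ((g.continuous.tendsto p).comp hz)).add tendsto_const_nhds
    exact tendsto_nhds_unique h1 h3
  by_contra hne
  -- a second point p' ≠ p
  obtain ⟨a, b, hab⟩ := h2X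
  have hp'ex : ∃ p' : X, p' ≠ p := by
    by_cases h : a = p
    · exact ⟨b, fun hb => hab (h.trans hb.symm)⟩
    · exact ⟨a, h⟩
  obtain ⟨p', hp'⟩ := hp'ex
  -- y ≠ φ p'
  have hyp' : y ≠ φ p' := by
    intro heq
    obtain ⟨g₀, hg₀0, hg₀1, -⟩ := exists_continuous_zero_one_of_isClosed
      (isClosed_singleton (x := p')) (isClosed_singleton (x := p))
      (by simp [Set.disjoint_singleton, hp'])
    have h1 : Δ (cplx g₀) y = lam * 1 + μ (cplx g₀) := by
      rw [hΔy]
      congr 2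
      simp [hg₀1 (Set.mem_singleton p)]
    have h2 : Δ (cplx g₀) y = lam * 0 + μ (cplx g₀) := by
      rw [heq, hrep]
      congr 2
      simp [hg₀0 (Set.mem_singleton p')]
    rw [h1] at h2
    simp at h2
    exact hlam0 h2
  -- the peak function
  obtain ⟨F, hF01, hF1, hF0⟩ := exists_peak (p := p) (p' := p') (Ne.symm hp')
  set f : C(X, ℂ) := cplx F with hf
  obtain ⟨T, hTbij, hTdiam, hTf, -⟩ := hΔ f f
  have hTcd : ∀ u, cdiam (T u) = cdiam u := by
    intro u
    have := hTdiam u 0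
    simpa [map_zero] using this
  -- the Urysohn function on Y
  have hscl : IsClosed ({φ p, φ p'} : Set Y) :=
    ((Set.finite_singleton _).insert _).isClosed
  obtain ⟨hY, hY0, hY1, hY01⟩ := exists_continuous_zero_one_of_isClosed hscl
    (isClosed_singleton (x := y))
    (by
      rw [Set.disjoint_right]
      rintro x hx
      simp only [Set.mem_singleton_iff] at hx
      subst hx
      simp only [Set.mem_insert_iff, Set.mem_singleton_iff]
      push_neg
      exact ⟨hne, hyp'⟩)
  set w' : C(Y, ℂ) := lam • cplx hY with hw'
  obtain ⟨w, hw⟩ := hTbij.2 w'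
  set δ := (w p - w p').re with hδ
  -- transport identity
  have hid : ∀ c : ℂ, cdiam (f + c • w) = cdiam (Δ f + c • w') := by
    intro c
    have h1 : T (f + c • w) = Δ f + c • w' := by
      rw [map_add, map_smul, hTf, hw]
    rw [← h1, hTcd]
  -- values
  have hFp : F p = 1 := (hF1 p).mpr rfl
  have hFp' : F p' = 0 := (hF0 p').mpr rfl
  have hΔfy : Δ f y = lam + μ f := by
    rw [hΔy f]
    simp [hf, hFp]
  have hΔfp : Δ f (φ p) = lam + μ f := by
    rw [hrep]
    simp [hf, hFp]
  have hΔfp' : Δ f (φ p') = μ f := by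
    rw [hrep]
    simp [hf, hFp']
  have hw'y : w' y = lam := by
    simp [hw', hY1 (Set.mem_singleton y)]
  have hw'p : w' (φ p) = 0 := by
    have : hY (φ p) = 0 := hY0 (Set.mem_insert _ _)
    simp [hw', this]
  have hw'p' : w' (φ p') = 0 := by
    have : hY (φ p') = 0 := hY0 (Set.mem_insert_of_mem _ (Set.mem_singleton _))
    simp [hw', this]
  -- lower bounds
  have LB1 : ∀ t : ℝ, 1 + t ≤ cdiam (Δ f + (t : ℂ) • w') := by
    intro t
    have hle := abs_sub_le_cdiam (Δ f + (t : ℂ) • w') y (φ p')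
    have hval : (Δ f + (t : ℂ) • w') y - (Δ f + (t : ℂ) • w') (φ p')
        = lam * (1 + (t : ℂ)) := by
      simp only [ContinuousMap.add_apply, ContinuousMap.smul_apply, smul_eq_mul,
        hΔfy, hΔfp', hw'y, hw'p']
      ring
    rw [hval] at hle
    calc 1 + t ≤ |1 + t| := le_abs_self _
      _ = ‖lam * (1 + (t : ℂ))‖ := by
          rw [norm_mul, hlam, one_mul]
          rw [show ((1 : ℂ) + (t : ℂ)) = (((1 + t : ℝ)) : ℂ) by push_cast; ring]
          rw [Complex.norm_real, Real.norm_eq_abs]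
      _ ≤ cdiam (Δ f + (t : ℂ) • w') := hle
  have LB2 : ∀ t : ℝ, 1 ≤ cdiam (Δ f + (t : ℂ) • w') := by
    intro t
    have hle := abs_sub_le_cdiam (Δ f + (t : ℂ) • w') (φ p) (φ p')
    have hval : (Δ f + (t : ℂ) • w') (φ p) - (Δ f + (t : ℂ) • w') (φ p') = lam := by
      simp only [ContinuousMap.add_apply, ContinuousMap.smul_apply, smul_eq_mul,
        hΔfp, hΔfp', hw'p, hw'p']
      ring
    rw [hval, hlam] at hle
    exact hle
  -- Danskin estimates
  obtain ⟨η₁, hη₁, hD₁⟩ := danskin F hF01 hF1 hF0 w (ε := 1/4) (by norm_num)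
  obtain ⟨η₂, hη₂, hD₂⟩ := danskin F hF01 hF1 hF0 (-w) (ε := 1/4) (by norm_num)
  set t₀ := min η₁ η₂ / 2 with ht₀
  have ht₀pos : 0 < t₀ := by positivity
  have ht₀1 : t₀ < η₁ := by
    have := min_le_left η₁ η₂
    simp only [ht₀]
    linarith
  have ht₀2 : t₀ < η₂ := by
    have := min_le_right η₁ η₂
    simp only [ht₀]
    linarith
  -- first estimate: δ ≥ 3/4
  have h1 := hD₁ t₀ ht₀pos ht₀1
  rw [show cplx F = f from rfl, hid (t₀ : ℂ)] at h1
  have hδ1 : 3/4 ≤ δ := by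
    have := LB1 t₀
    rw [hδ] at *
    nlinarith [this, h1, ht₀pos]
  -- second estimate: δ ≤ 1/4
  have h2 := hD₂ t₀ ht₀pos ht₀2
  have hneg : ((-w) p - (-w) p').re = -δ := by
    simp [hδ, Complex.sub_re, Complex.neg_re]
    ring
  rw [hneg] at h2
  have hidneg : cdiam (cplx F + (t₀ : ℂ) • (-w)) = cdiam (Δ f + ((-t₀ : ℝ) : ℂ) • w') := by
    have e1 : cplx F + (t₀ : ℂ) • (-w) = f + ((-t₀ : ℝ) : ℂ) • w := by
      rw [show cplx F = f from rfl]
      congr 1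
      push_cast
      module
    rw [e1, hid]
  rw [hidneg] at h2
  have hδ2 : δ ≤ 1/4 := by
    have := LB2 (-t₀)
    nlinarith [this, h2, ht₀pos]
  linarith

end Core

/-- Claim 15: if `Δ(f)(φ(x)) = λ f(x) + μ(f)` for all `f` and `x`, then the injective map
`φ : X → Y` is a homeomorphism onto its image `Y₀ = φ(X)`. -/
theorem point_map_is_embedding
    {X Y : Type*} [TopologicalSpace X] [CompactSpace X] [T2Space X] [FirstCountableTopology X]
    [TopologicalSpace Y] [CompactSpace Y] [T2Space Y] [FirstCountableTopology Y]
    (h2X : ∃ a b : X, a ≠ b) (h2Y : ∃ a b : Y, a ≠ b)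
    (Δ : C(X, ℂ) → C(Y, ℂ)) (hΔ : TwoLocalDiamPreserving Δ)
    (φ : X → Y) (hφ : Function.Injective φ)
    (lam : ℂ) (hlam : ‖lam‖ = 1) (μ : C(X, ℂ) → ℂ)
    (hrep : ∀ (f : C(X, ℂ)) (x : X), Δ f (φ x) = lam * f x + μ f) :
    Topology.IsEmbedding φ := by
  have hlam0 : lam ≠ 0 := by
    intro h
    rw [h] at hlam
    simp at hlam
  -- continuity of φ via sequences
  have hcont : Continuous φ := by
    have hseq : SeqContinuous φ := by
      intro z p hz
      by_contra hnot
      rw [tendsto_nhds] at hnot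
      push_neg at hnot
      obtain ⟨s, hso, hps, hfreq⟩ := hnot
      have hfreq' : ∃ᶠ n in atTop, φ (z n) ∉ s := by
        intro hev
        exact hfreq (hev.mono fun n hn => not_not.mp hn)
      obtain ⟨ns, hns, hmem⟩ := Filter.extraction_of_frequently_atTop hfreq'
      obtain ⟨y, -, ms, hms, hylim⟩ :=
        isCompact_univ.tendsto_subseq (x := fun n => (φ ∘ z) (ns n)) (fun n => Set.mem_univ _)
      have hz' : Tendsto (fun n => z (ns (ms n))) atTop (𝓝 p) := by
        have := hz.comp ((hns.comp hms).tendsto_atTop)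
        exact this
      have hy' : Tendsto (fun n => φ (z (ns (ms n)))) atTop (𝓝 y) := by
        exact hylim
      have hcore := core_limit h2X hΔ hlam hrep hz' hy'
      have hyc : y ∈ sᶜ := by
        refine hso.isClosed_compl.mem_of_tendsto hy' (Eventually.of_forall fun n => ?_)
        exact hmem (ms n)
      exact hyc (hcore ▸ hps)
    exact hseq.continuous
  refine ⟨Topology.isInducing_iff_nhds.mpr fun x => le_antisymm ?_ ?_, hφ⟩
  · exact Filter.map_le_iff_le_comap.mp (hcont.tendsto x)
  · intro U hU
    obtain ⟨U', hU'U, hU'o, hxU'⟩ := mem_nhds_iff.mp hU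
    obtain ⟨g, hg0, hg1, -⟩ := exists_continuous_zero_one_of_isClosed
      (isClosed_singleton (x := x)) hU'o.isClosed_compl
      (by simpa [Set.disjoint_singleton_left] using hxU')
    set gc := cplx g with hgc
    refine Filter.mem_comap.mpr
      ⟨(Δ gc) ⁻¹' Metric.ball (Δ gc (φ x)) (1/2), ?_, ?_⟩
    · refine ((Δ gc).continuous.isOpen_preimage _ Metric.isOpen_ball).mem_nhds ?_
      simp only [Set.mem_preimage, Metric.mem_ball, dist_self]
      norm_num
    · intro x' hx'
      simp only [Set.mem_preimage, Metric.mem_ball, Complex.dist_eq] at hx'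
      apply hU'U
      by_contra hnotU'
      have h1 : g x' = 1 := hg1 hnotU'
      have h0 : g x = 0 := hg0 (Set.mem_singleton x)
      rw [hrep, hrep] at hx'
      have : ‖lam‖ < 1/2 := by
        have e : lam * (gc x') + μ gc - (lam * (gc x) + μ gc) = lam := by
          simp [hgc, h1, h0]
        rwa [e] at hx'
      rw [hlam] at this
      norm_num at this
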